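/- Let n ≥ 2 and let w_0, ..., w_{n-1} be real arc weights on the directed cycle on n vertices, with total weight w = Σ_i w_i nonzero. Let W be the weighted distance matrix, where W_{ii} = 0 and W_{ij} = Σ_{k=0}^{d-1} w_{(i+k) mod n} with d = (j - i) mod n ∈ {1,...,n-1} for i ≠ j. Let α be the vector with α_i = w_{(i-1) mod n}/w. Then α^T W = λ j^T where λ = w^{(2)}/w and w^{(2)} = Σ_{0 ≤ i < j ≤ n-1} w_i w_j. -/

import Mathlib

/-!
Reading the path from `i` to `j` backwards from `j` and clearing the denominator `∑ w_i`, the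
`j`-th entry of `αᵀW` becomes `∑_m v_m ∑_{k<m} v_k` for the weights `v_t = w_{j-t-1}` listed
backwards from `j`. This is the sum of `v_k v_m` over all pairs `k < m`, i.e. the second
elementary symmetric function of the weights, which does not depend on the order in which they
are listed, hence not on `j`.
-/

open Matrix Finset

section PairSums

variable {ι R : Type*} [Fintype ι] [LinearOrder ι] [LocallyFiniteOrderTop ι] [CommSemiring R]

theorem sum_sum_Iio_mul_eq_sum_sum_Ioi_mul [LocallyFiniteOrderBot ι] (f : ι → R) :
    ∑ i, ∑ j ∈ Iio i, f i * f j = ∑ i, ∑ j ∈ Ioi i, f i * f j := by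
  rw [sum_comm' (t' := univ) (s' := Ioi) (h := by simp)]
  exact sum_congr rfl fun _ _ => sum_congr rfl fun _ _ => mul_comm _ _

theorem sum_sum_Ioi_mul_comp_perm (σ : Equiv.Perm ι) (f : ι → R) :
    ∑ i, ∑ j ∈ Ioi i, f (σ i) * f (σ j) = ∑ i, ∑ j ∈ Ioi i, f i * f j := by
  rw [sum_sigma', sum_sigma']
  refine sum_nbij' (fun p => ⟨min (σ p.1) (σ p.2), max (σ p.1) (σ p.2)⟩)
    (fun p => ⟨min (σ.symm p.1) (σ.symm p.2), max (σ.symm p.1) (σ.symm p.2)⟩) ?_ ?_ ?_ ?_ ?_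
  · rintro ⟨i, j⟩ h
    simp only [mem_sigma, mem_univ, mem_Ioi, true_and] at h ⊢
    exact min_lt_max.2 (σ.injective.ne h.ne)
  · rintro ⟨i, j⟩ h
    simp only [mem_sigma, mem_univ, mem_Ioi, true_and] at h ⊢
    exact min_lt_max.2 (σ.symm.injective.ne h.ne)
  · rintro ⟨i, j⟩ h
    simp only [mem_sigma, mem_univ, mem_Ioi, true_and] at h ⊢
    rcases le_total (σ i) (σ j) with hij | hij <;> simp [hij, h.le]
  · rintro ⟨i, j⟩ h
    simp only [mem_sigma, mem_univ, mem_Ioi, true_and] at h ⊢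
    rcases le_total (σ.symm i) (σ.symm j) with hij | hij <;> simp [hij, h.le]
  · rintro ⟨i, j⟩ -
    rcases le_total (σ i) (σ j) with hij | hij <;> simp [hij, mul_comm]

end PairSums

theorem Fin.sum_range_val_eq_sum_Iio {M : Type*} [AddCommMonoid M] {n : ℕ} [NeZero n]
    (a : Fin n) (g : Fin n → M) :
    ∑ k ∈ range a.val, g (Fin.ofNat n k) = ∑ k ∈ Iio a, g k := by
  rw [← Nat.Iio_eq_range, ← Fin.map_valEmbedding_Iio, sum_map]
  simp

section CycleDistance

open Fin.CommRing

variable {n : ℕ} [NeZero n]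

def cycleDist {M : Type*} [AddCommMonoid M] (w : Fin n → M) (i j : Fin n) : M :=
  ∑ k ∈ range (j - i : Fin n).val, w (i + Fin.ofNat n k)

theorem cycleDist_eq_sum_Iio {M : Type*} [AddCommMonoid M] (w : Fin n → M) (i j : Fin n) :
    cycleDist w i j = ∑ k ∈ Iio (j - i), w (j - k - 1) := by
  rw [cycleDist, ← sum_range_reflect, ← Fin.sum_range_val_eq_sum_Iio]
  refine sum_congr rfl fun k hk => congrArg w ?_
  have hk := mem_range.1 hk
  rw [Fin.ofNat_eq_cast, Fin.ofNat_eq_cast, Nat.cast_sub (by omega), Nat.cast_sub (by omega)]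
  simp only [Fin.cast_val_eq_self, Nat.cast_one]
  ring

theorem sum_mul_cycleDist {R : Type*} [CommSemiring R] (w : Fin n → R) (j : Fin n) :
    ∑ i, w (i - 1) * cycleDist w i j = ∑ i, ∑ k ∈ Ioi i, w i * w k := by
  let σ := (Equiv.subLeft j).trans (Equiv.subRight 1)
  calc ∑ i, w (i - 1) * cycleDist w i j
      = ∑ m, ∑ k ∈ Iio m, (w ∘ σ) m * (w ∘ σ) k := by
        rw [← (Equiv.subLeft j).sum_comp]
        simp_rw [cycleDist_eq_sum_Iio, mul_sum, Equiv.subLeft_apply, sub_sub_cancel]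
        rfl
    _ = ∑ i, ∑ k ∈ Ioi i, w i * w k := by
      rw [sum_sum_Iio_mul_eq_sum_sum_Ioi_mul (w ∘ σ)]
      exact sum_sum_Ioi_mul_comp_perm σ w

end CycleDistance

theorem stmt_7 {n : ℕ} [NeZero n] (w : Fin n → ℝ)
    (W : Matrix (Fin n) (Fin n) ℝ)
    (hW : W = Matrix.of fun i j => ∑ k ∈ Finset.range ((j - i : Fin n) : ℕ), w (i + (Fin.ofNat n k)))
    (α : Fin n → ℝ) (hα : α = fun i => w (i - 1) / (∑ i, w i)) :
    vecMul α W = fun _ => (∑ i, ∑ j ∈ Finset.Ioi i, w i * w j) / (∑ i, w i) := by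
  subst hW hα
  funext j
  simp only [vecMul, dotProduct, of_apply, div_mul_eq_mul_div, ← sum_div]
  exact congrArg (· / _) (sum_mul_cycleDist w j)
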